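/- arXiv:0711.4238 — 2 statements merged into one kernel-verified Lean document; each statement's English description precedes it below -/
import Mathlib

section
/- If G is a finitely generated group, N ⊴ G is a normal subgroup maximal with respect to having infinite index, and G has no proper subgroups of finite index, then the quotient Q = G/N is an infinite simple group. -/
theorem QuotientGroup.isSimpleGroup_of_forall_normal_gt {G : Type*} [Group G] {N : Subgroup G}
    [N.Normal] [Nontrivial (G ⧸ N)] (hmax : ∀ M : Subgroup G, M.Normal → N < M → M = ⊤) :
    IsSimpleGroup (G ⧸ N) where
  eq_bot_or_eq_top_of_normal H hH := by
    have hmap : (H.comap (mk' N)).map (mk' N) = H :=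
      Subgroup.map_comap_eq_self_of_surjective (mk'_surjective N) H
    have hle : N ≤ H.comap (mk' N) := by
      simpa only [ker_mk'] using (mk' N).ker_le_comap H
    rcases hle.eq_or_lt with heq | hlt
    · left
      rw [← hmap, ← heq, map_mk'_self]
    · right
      rw [← hmap, hmax _ (hH.comap (mk' N)) hlt,
        Subgroup.map_top_of_surjective _ (mk'_surjective N)]

theorem stmt_2_general {G : Type*} [Group G]
    (N : Subgroup G) [hN : N.Normal]
    (hinf : N.index = 0)
    (hmax : ∀ M : Subgroup G, M.Normal → N < M → M.index ≠ 0)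
    (hnofin : ∀ H : Subgroup G, H.index ≠ 0 → H = ⊤) :
    Infinite (G ⧸ N) ∧ IsSimpleGroup (G ⧸ N) := by
  have hInfinite : Infinite (G ⧸ N) := Subgroup.index_eq_zero_iff_infinite.mp hinf
  exact ⟨hInfinite, QuotientGroup.isSimpleGroup_of_forall_normal_gt
    fun M hM hNM => hnofin M (hmax M hM hNM)⟩

/-- If `G` is a finitely generated group, `N ⊴ G` is maximal with respect to
having infinite index, and `G` has no proper subgroups of finite index, then
`G ⧸ N` is an infinite simple group. -/
theorem stmt_2 {G : Type*} [Group G] (hfg : Group.FG G)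
    (N : Subgroup G) [hN : N.Normal]
    (hinf : N.index = 0)
    (hmax : ∀ M : Subgroup G, M.Normal → N < M → M.index ≠ 0)
    (hnofin : ∀ H : Subgroup G, H.index ≠ 0 → H = ⊤) :
    Infinite (G ⧸ N) ∧ IsSimpleGroup (G ⧸ N) :=
  stmt_2_general N (hN := hN) hinf hmax hnofin
end

section
/- Let γ be a loop in the 1-skeleton of a simplicial complex K having minimal combinatorial length L among all loops in the 1-skeleton of K in its free homotopy class. Then any lift γ̃ of γ to the universal cover K̃ of K is a local geodesic on scale L: for any two vertices of γ̃ at distance at most L along γ̃, their distance along γ̃ equals their distance in the 1-skeleton of K̃. -/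
/-!
Walking along `γ` from `γ i` to `γ j` gives `dist ≤ |i - j|`. Conversely, for `i ≤ j ≤ i + L`, a
shortcut from `γ i` to `γ j` followed by `γ` from `j` to `i + L` would be a walk from `γ i` to
`t (γ i) = γ (i + L)` of length less than `L`.
-/

namespace SimpleGraph

variable {V : Type*} {G : SimpleGraph V}

lemma Reachable.le_dist_of_forall_le_length {u v : V} {n : ℕ} (h : G.Reachable u v)
    (hn : ∀ w : G.Walk u v, n ≤ w.length) : n ≤ G.dist u v := by
  obtain ⟨p, hp⟩ := h.exists_walk_length_eq_dist
  exact hp ▸ hn p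

variable {γ : ℤ → V}

lemma exists_walk_length_eq_of_adj_succ (hadj : ∀ i, G.Adj (γ i) (γ (i + 1))) (a : ℤ) (n : ℕ) :
    ∃ w : G.Walk (γ a) (γ (a + n)), w.length = n := by
  induction n generalizing a with
  | zero => exact ⟨Walk.nil.copy rfl (by simp), by simp⟩
  | succ n ih =>
    obtain ⟨w, hw⟩ := ih (a + 1)
    exact ⟨(Walk.cons (hadj a) w).copy rfl (by push_cast; ring_nf), by simp [hw]⟩

lemma reachable_of_adj_succ (hadj : ∀ i, G.Adj (γ i) (γ (i + 1))) (i j : ℤ) :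
    G.Reachable (γ i) (γ j) := by
  wlog hij : i ≤ j generalizing i j
  · exact (this j i (by omega)).symm
  obtain ⟨n, rfl⟩ : ∃ n : ℕ, j = i + n := ⟨(j - i).toNat, by omega⟩
  obtain ⟨w, -⟩ := exists_walk_length_eq_of_adj_succ hadj i n
  exact ⟨w⟩

lemma dist_le_natAbs_sub_of_adj_succ (hadj : ∀ i, G.Adj (γ i) (γ (i + 1))) (i j : ℤ) :
    G.dist (γ i) (γ j) ≤ (i - j).natAbs := by
  wlog hij : i ≤ j generalizing i j
  · rw [dist_comm, show (i - j).natAbs = (j - i).natAbs by omega]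
    exact this j i (by omega)
  obtain ⟨n, rfl⟩ : ∃ n : ℕ, j = i + n := ⟨(j - i).toNat, by omega⟩
  obtain ⟨w, hw⟩ := exists_walk_length_eq_of_adj_succ hadj i n
  calc G.dist (γ i) (γ (i + n)) ≤ w.length := dist_le w
    _ = (i - (i + n)).natAbs := by omega

lemma natAbs_sub_le_dist_of_translate (hadj : ∀ i, G.Adj (γ i) (γ (i + 1))) {L : ℕ}
    {t : G ≃g G} (ht : ∀ i : ℤ, t (γ i) = γ (i + L))
    (hmin : ∀ (v : V) (w : G.Walk v (t v)), L ≤ w.length) {i j : ℤ} (hij : i ≤ j)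
    (hjL : j ≤ i + L) : (i - j).natAbs ≤ G.dist (γ i) (γ j) := by
  have hL : L ≤ G.dist (γ i) (t (γ i)) :=
    (ht i ▸ reachable_of_adj_succ hadj i (i + L)).le_dist_of_forall_le_length (hmin _)
  rw [ht] at hL
  have htriangle := (reachable_of_adj_succ hadj j (i + L)).dist_triangle_right (γ i)
  have hrest := dist_le_natAbs_sub_of_adj_succ hadj j (i + L)
  omega

end SimpleGraph

theorem stmt_13_general {V : Type*} (Γ : SimpleGraph V) (L : ℕ)
    (t : Γ ≃g Γ) (γ : ℤ → V)
    (hadj : ∀ i : ℤ, Γ.Adj (γ i) (γ (i + 1)))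
    (ht : ∀ i : ℤ, t (γ i) = γ (i + L))
    (hmin : ∀ (v : V) (w : Γ.Walk v (t v)), L ≤ w.length) :
    ∀ i j : ℤ, (i - j).natAbs ≤ L → Γ.dist (γ i) (γ j) = (i - j).natAbs := by
  intro i j hijL
  wlog hij : i ≤ j generalizing i j
  · rw [Γ.dist_comm, show (i - j).natAbs = (j - i).natAbs by omega]
    exact this j i (by omega) (by omega)
  exact (Γ.dist_le_natAbs_sub_of_adj_succ hadj i j).antisymm
    (Γ.natAbs_sub_le_dist_of_translate hadj ht hmin hij (by omega))

/-- Let `γ` be a bi-infinite path in the 1-skeleton `Γ` of the universal cover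
`K̃` of a simplicial complex `K`, invariant under a deck transformation `t`
acting on it as a translation by `L`.  Minimality of the projected loop in its
free homotopy class means precisely that every walk in `Γ` from a vertex `v` to
`t v` has length at least `L`.  Then `γ` minimizes distance in the 1-skeleton
between any two of its vertices lying at distance at most `L` along `γ`. -/
theorem stmt_13 {V : Type*} (Γ : SimpleGraph V) (L : ℕ) (hL : 0 < L)
    (t : Γ ≃g Γ) (γ : ℤ → V)
    (hadj : ∀ i : ℤ, Γ.Adj (γ i) (γ (i + 1)))
    (ht : ∀ i : ℤ, t (γ i) = γ (i + L))
    (hmin : ∀ (v : V) (w : Γ.Walk v (t v)), L ≤ w.length) :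
    ∀ i j : ℤ, (i - j).natAbs ≤ L → Γ.dist (γ i) (γ j) = (i - j).natAbs :=
  stmt_13_general Γ L t γ hadj ht hmin
end
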